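/- Let a_1, …, a_l ≥ 2 be integers with continuants p_l, p_{l−1}, q_l, q_{l−1} and r_l = p_l − q_l, and let b_1, …, b_m ≥ 2 be integers whose continuant numerator equals p_l and whose continuant denominator equals r_l. Then the sequence (a_1, …, a_{l−1}, a_l + b_m + 1, b_{m−1}, …, b_1), obtained by concatenating a and the reversal of b and merging the junction entries into the single entry a_l + b_m + 1, has continuant numerator p_l² + p_l p_{l−1} − p_{l−1}² and continuant denominator q_l p_l + q_{l−1} p_l − q_{l−1} p_{l−1} − 1. -/

import Mathlib

/-- Continuant numerators `p_j` of `[c_1, c_2, …]⁻`: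
`p_0 = 1`, `p_1 = c_1`, `p_j = c_j p_{j-1} - p_{j-2}`. -/
def contP (c : ℕ → ℤ) : ℕ → ℤ
  | 0 => 1
  | 1 => c 1
  | (j + 2) => c (j + 2) * contP c (j + 1) - contP c j

/-- Continuant denominators `q_j` of `[c_1, c_2, …]⁻`:
`q_0 = 0`, `q_1 = 1`, `q_j = c_j q_{j-1} - q_{j-2}`. -/
def contQ (c : ℕ → ℤ) : ℕ → ℤ
  | 0 => 0
  | 1 => 1
  | (j + 2) => c (j + 2) * contQ c (j + 1) - contQ c j

/-! Any solution `f` of the continuant recurrence of a sequence which, after position `l`,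
continues with `y₂, …, y_m` satisfies `f (l + m - 1) = (f l - y₁ f (l - 1)) Q(y) + f (l - 1) P(y)`,
where `P(y), Q(y)` are the continuants of `y`. Take `y = (b_m, …, b_1)`, whose continuants are
`P(y) = p_m(b) = p_l` and `Q(y) = p_{m-1}(b)`; the merged entry makes
`f l - b_m f (l - 1)` equal to `p_l + p_{l-1}` (resp. `q_l + q_{l-1}`). It remains to see
`p_{m-1}(b) = p_l - p_{l-1}`: by the determinant identities of `a` and `b` both sides are inverses
of `-q_l` modulo `p_l`, and both lie in `(0, p_l)` because the entries are `≥ 2`. -/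

@[simp] lemma contP_zero (c : ℕ → ℤ) : contP c 0 = 1 := rfl
@[simp] lemma contP_one (c : ℕ → ℤ) : contP c 1 = c 1 := rfl
lemma contP_add_two (c : ℕ → ℤ) (j : ℕ) :
    contP c (j + 2) = c (j + 2) * contP c (j + 1) - contP c j := rfl
@[simp] lemma contQ_zero (c : ℕ → ℤ) : contQ c 0 = 0 := rfl
@[simp] lemma contQ_one (c : ℕ → ℤ) : contQ c 1 = 1 := rfl
lemma contQ_add_two (c : ℕ → ℤ) (j : ℕ) :
    contQ c (j + 2) = c (j + 2) * contQ c (j + 1) - contQ c j := rfl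

section Congr

variable {c d : ℕ → ℤ}

lemma contP_congr : ∀ {n : ℕ}, (∀ i, 1 ≤ i → i ≤ n → c i = d i) → contP c n = contP d n
  | 0, _ => rfl
  | 1, h => h 1 le_rfl le_rfl
  | n + 2, h => by
    rw [contP_add_two, contP_add_two, h (n + 2) (by omega) le_rfl,
      contP_congr (n := n + 1) fun i hi hin => h i hi (by omega),
      contP_congr (n := n) fun i hi hin => h i hi (by omega)]

lemma contQ_congr : ∀ {n : ℕ}, (∀ i, 1 ≤ i → i ≤ n → c i = d i) → contQ c n = contQ d n
  | 0, _ => rfl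
  | 1, _ => rfl
  | n + 2, h => by
    rw [contQ_add_two, contQ_add_two, h (n + 2) (by omega) le_rfl,
      contQ_congr (n := n + 1) fun i hi hin => h i hi (by omega),
      contQ_congr (n := n) fun i hi hin => h i hi (by omega)]

lemma contP_succ_of_eq_add {n : ℕ} (h : ∀ i, 1 ≤ i → i ≤ n → d i = c i) {t : ℤ}
    (ht : d (n + 1) = c (n + 1) + t) : contP d (n + 1) = contP c (n + 1) + t * contP c n := by
  cases n with
  | zero => simp [ht]
  | succ j =>
    rw [contP_add_two, contP_add_two, ht, contP_congr h,
      contP_congr fun i hi hij => h i hi (by omega)]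
    ring

lemma contQ_succ_of_eq_add {n : ℕ} (h : ∀ i, 1 ≤ i → i ≤ n → d i = c i) {t : ℤ}
    (ht : d (n + 1) = c (n + 1) + t) : contQ d (n + 1) = contQ c (n + 1) + t * contQ c n := by
  cases n with
  | zero => simp
  | succ j =>
    rw [contQ_add_two, contQ_add_two, ht, contQ_congr h,
      contQ_congr fun i hi hij => h i hi (by omega)]
    ring

end Congr

def SolvesContRec (c f : ℕ → ℤ) : Prop :=
  ∀ j, f (j + 2) = c (j + 2) * f (j + 1) - f j

lemma solvesContRec_contP (c : ℕ → ℤ) : SolvesContRec c (contP c) := contP_add_two c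
lemma solvesContRec_contQ (c : ℕ → ℤ) : SolvesContRec c (contQ c) := contQ_add_two c

namespace SolvesContRec

variable {c f g : ℕ → ℤ}

lemma casoratian (hf : SolvesContRec c f) (hg : SolvesContRec c g) :
    ∀ n, f n * g (n + 1) - f (n + 1) * g n = f 0 * g 1 - f 1 * g 0
  | 0 => rfl
  | n + 1 => by
    rw [hf n, hg n, ← hf.casoratian hg n]
    ring

lemma eq_shift (hf : SolvesContRec c f) (n : ℕ) :
    ∀ k, f (n + 1 + k) = f (n + 1) * contP (fun i => c (n + 1 + i)) k
      - f n * contQ (fun i => c (n + 1 + i)) k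
  | 0 => by simp
  | 1 => by simp [hf n, mul_comm]
  | k + 2 => by
    rw [← add_assoc, hf, contP_add_two, contQ_add_two, add_assoc (n + 1) k 1,
      hf.eq_shift n (k + 1), hf.eq_shift n k, add_assoc (n + 1) k 2]
    ring

lemma eq_merge (hf : SolvesContRec c f) {n k : ℕ} {y : ℕ → ℤ}
    (hy : ∀ i, 1 ≤ i → i ≤ k → c (n + 1 + i) = y (1 + i)) :
    f (n + 1 + k) = (f (n + 1) - y 1 * f n) * contQ y (k + 1) + f n * contP y (k + 1) := by
  have hP := (solvesContRec_contP y).eq_shift 0 k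
  have hQ := (solvesContRec_contQ y).eq_shift 0 k
  simp only [zero_add, contP_zero, contP_one, contQ_zero, contQ_one, add_comm 1 k] at hP hQ
  rw [hf.eq_shift n k, contP_congr hy, contQ_congr hy, hP, hQ]
  ring

end SolvesContRec

lemma contP_mul_contQ_succ_sub (c : ℕ → ℤ) (n : ℕ) :
    contP c n * contQ c (n + 1) - contP c (n + 1) * contQ c n = 1 := by
  simpa using (solvesContRec_contP c).casoratian (solvesContRec_contQ c) n

section Reverse

variable (b : ℕ → ℤ)

lemma contP_contQ_reverse_succ (k : ℕ) :
    contP (fun i => b (k + 2 - i)) (k + 1) =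
        b (k + 1) * contP (fun i => b (k + 1 - i)) k - contQ (fun i => b (k + 1 - i)) k ∧
      contQ (fun i => b (k + 2 - i)) (k + 1) = contP (fun i => b (k + 1 - i)) k := by
  have htail : (fun i => b (k + 2 - (0 + 1 + i))) = fun i => b (k + 1 - i) := by
    funext i; congr 1; omega
  have hP := (solvesContRec_contP fun i => b (k + 2 - i)).eq_shift 0 k
  have hQ := (solvesContRec_contQ fun i => b (k + 2 - i)).eq_shift 0 k
  rw [htail, zero_add, add_comm 1 k] at hP hQ
  simp only [contP_one, contP_zero, contQ_one, contQ_zero] at hP hQ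
  exact ⟨by rw [hP]; simp, by rw [hQ]; ring⟩

lemma contP_reverse : ∀ k, contP (fun i => b (k + 1 - i)) k = contP b k
  | 0 => rfl
  | 1 => rfl
  | j + 2 => by
    rw [(contP_contQ_reverse_succ b (j + 1)).1, (contP_contQ_reverse_succ b j).2,
      contP_reverse (j + 1), contP_reverse j, contP_add_two]

lemma contQ_reverse (k : ℕ) : contQ (fun i => b (k + 2 - i)) (k + 1) = contP b k := by
  rw [(contP_contQ_reverse_succ b k).2, contP_reverse]

end Reverse

lemma contP_pos_and_lt_succ (c : ℕ → ℤ) :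
    ∀ n, (∀ i, 1 ≤ i → i ≤ n + 1 → 2 ≤ c i) → 0 < contP c n ∧ contP c n < contP c (n + 1)
  | 0, h => by
    have := h 1 le_rfl le_rfl
    simp only [contP_zero, zero_add, contP_one]
    omega
  | n + 1, h => by
    obtain ⟨hpos, hlt⟩ := contP_pos_and_lt_succ c n fun i hi hin => h i hi (by omega)
    have h2 := h (n + 2) (by omega) le_rfl
    rw [contP_add_two]
    constructor <;> nlinarith

lemma contP_eq_sub_of_dual {c d : ℕ → ℤ} {n k : ℕ}
    (hc : ∀ i, 1 ≤ i → i ≤ n + 1 → 2 ≤ c i) (hd : ∀ i, 1 ≤ i → i ≤ k + 1 → 2 ≤ d i)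
    (hP : contP d (k + 1) = contP c (n + 1))
    (hQ : contQ d (k + 1) = contP c (n + 1) - contQ c (n + 1)) :
    contP d k = contP c (n + 1) - contP c n := by
  set p := contP c (n + 1)
  have hdet_c := contP_mul_contQ_succ_sub c n
  have hdet_d := contP_mul_contQ_succ_sub d k
  rw [hP, hQ] at hdet_d
  obtain ⟨hc₀, hc₁⟩ := contP_pos_and_lt_succ c n hc
  obtain ⟨hd₀, hd₁⟩ := contP_pos_and_lt_succ d k hd
  rw [hP] at hd₁
  -- Both `contP d k` and `p - contP c n` invert `-contQ c (n + 1)` modulo `p` and lie in `(0, p)`.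
  have hcop : IsCoprime p (p - contQ c (n + 1)) :=
    ⟨-contQ d k, contP d k, by linear_combination hdet_d⟩
  have hdvd : p ∣ (contP d k - (p - contP c n)) * (p - contQ c (n + 1)) :=
    ⟨contQ d k - p + contQ c (n + 1) + contP c n - contQ c n,
      by linear_combination hdet_d - hdet_c⟩
  have hzero : contP d k - (p - contP c n) = 0 :=
    Int.eq_zero_of_abs_lt_dvd (hcop.dvd_of_dvd_mul_right hdvd) (abs_lt.2 ⟨by omega, by omega⟩)
  linarith

/-- **Merged concatenation with the reversal.** Let `a_1,…,a_l ≥ 2` have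
continuants `p_l, p_{l-1}, q_l, q_{l-1}` and `r_l = p_l - q_l`, and let
`b_1,…,b_m ≥ 2` satisfy `[b_1,…,b_m]⁻ = p_l / r_l`.  Then the sequence
`(a_1,…,a_{l-1}, a_l + b_m + 1, b_{m-1},…,b_1)` (of length `l + m - 1`) has
continuant numerator `p_l² + p_l p_{l-1} - p_{l-1}²` and denominator
`q_l p_l + q_{l-1} p_l - q_{l-1} p_{l-1} - 1`. -/
theorem continuant_merged_concat (l m : ℕ) (hl : 1 ≤ l) (hm : 1 ≤ m)
    (a b : ℕ → ℤ)
    (ha : ∀ i, 1 ≤ i → i ≤ l → 2 ≤ a i) (hb : ∀ i, 1 ≤ i → i ≤ m → 2 ≤ b i)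
    (hnum : contP b m = contP a l)
    (hden : contQ b m = contP a l - contQ a l)
    (c : ℕ → ℤ)
    (hc : c = fun i => if i < l then a i
                       else if i = l then a l + b m + 1
                       else b (l + m - i)) :
    contP c (l + m - 1) =
      contP a l ^ 2 + contP a l * contP a (l - 1) - contP a (l - 1) ^ 2 ∧
    contQ c (l + m - 1) =
      contQ a l * contP a l + contQ a (l - 1) * contP a l -
        contQ a (l - 1) * contP a (l - 1) - 1 := by
  obtain ⟨n, rfl⟩ := Nat.exists_eq_add_of_le' hl
  obtain ⟨k, rfl⟩ := Nat.exists_eq_add_of_le' hm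
  have hlen : n + 1 + (k + 1) - 1 = n + 1 + k := by omega
  simp only [hlen, Nat.add_sub_cancel]
  have hhead : ∀ i, 1 ≤ i → i ≤ n → c i = a i := fun i _ hi => by
    simp only [hc, if_pos (show i < n + 1 by omega)]
  have hmid : c (n + 1) = a (n + 1) + (b (k + 1) + 1) := by simp [hc]; ring
  -- after position `n + 1`, `c` continues with the tail of the reversal `b (k + 1), …, b 1`
  have htail : ∀ i, 1 ≤ i → i ≤ k → c (n + 1 + i) = b (k + 2 - (1 + i)) := fun i hi _ => by
    simp only [hc, if_neg (show ¬n + 1 + i < n + 1 by omega),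
      if_neg (show n + 1 + i ≠ n + 1 by omega)]
    congr 1; omega
  have hkey : contP b k = contP a (n + 1) - contP a n := contP_eq_sub_of_dual ha hb hnum hden
  have hdet := contP_mul_contQ_succ_sub a n
  have hP := (solvesContRec_contP c).eq_merge (y := fun i => b (k + 2 - i)) htail
  have hQ := (solvesContRec_contQ c).eq_merge (y := fun i => b (k + 2 - i)) htail
  rw [contP_succ_of_eq_add hhead hmid, contP_congr hhead, contP_reverse, hnum] at hP
  rw [contQ_succ_of_eq_add hhead hmid, contQ_congr hhead, contP_reverse, hnum] at hQ
  simp only [contQ_reverse, hkey, show k + 2 - 1 = k + 1 from rfl] at hP hQ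
  exact ⟨by linear_combination hP, by linear_combination hQ - hdet⟩
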